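/- arXiv:1501.07378 — 2 statements merged into one kernel-verified Lean document; each statement's English description precedes it below -/
import Mathlib

section
/- In the super Yangian Y(gl_{M|N}), letting (t'_{ij}(u)) denote the entries of the inverse of the matrix T(u)=(t_{ij}(u)), one has (u-v)[t_{ij}(u), t'_{hk}(v)] = (-1)^{|i||j|+|i||h|+|j||h|} ( δ_{hj} sum_{g=1}^{M+N} t_{ig}(u) t'_{gk}(v) - δ_{ik} sum_{g=1}^{M+N} t'_{hg}(v) t_{gj}(u) ) for all 1≤i,j,h,k≤M+N. -/
noncomputable section

namespace SuperYangian

/-- The sign `(-1)^x` for `x : ZMod 2`. -/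
def sgn (x : ZMod 2) : ℂ := if x = 0 then 1 else -1

variable {A : Type*}

/-- The supercommutator `[x, y] = x*y - ε • (y*x)` with prescribed sign `ε`
(for homogeneous `x`, `y` one takes `ε = (-1)^{|x||y|}`). -/
def scomm [Ring A] [Algebra ℂ A] (ε : ℂ) (x y : A) : A := x * y - ε • (y * x)

/-- `off μ a = μ 0 + ⋯ + μ (a-1)`. -/
def off (μ : ℕ → ℕ) (a : ℕ) : ℕ := ∑ b ∈ Finset.range a, μ b

/-- A family `t i j r` (the coefficient of `u^{-r}` in `t_{ij}(u)`, with 0-based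
indices `i j < d`) satisfying the defining RTT relations of the super Yangian
`Y(gl_{M|N})` with parity sequence `p`; the super Yangian itself, via
`t_{i+1,j+1}^{(r)} = t i j r`, is the universal such family. -/
structure RTT (A : Type*) [Ring A] [Algebra ℂ A] (d : ℕ) (p : ℕ → ZMod 2) where
  t : ℕ → ℕ → ℕ → A
  t_zero : ∀ i j, t i j 0 = if i = j then (1 : A) else 0
  rtt : ∀ i j h k r s : ℕ, i < d → j < d → h < d → k < d →
    scomm (sgn ((p i + p j) * (p h + p k))) (t i j r) (t h k s) =
      sgn (p i * p j + p i * p h + p j * p h) •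
        ∑ g ∈ Finset.range (min r s),
          (t h j g * t i k (r + s - 1 - g) - t h j (r + s - 1 - g) * t i k g)

section Helpers
lemma zmod2_cases (x : ZMod 2) : x = 0 ∨ x = 1 := by revert x; decide

lemma sgn_add (a b : ZMod 2) : sgn (a + b) = sgn a * sgn b := by
  rcases zmod2_cases a with ha | ha <;> rcases zmod2_cases b with hb | hb <;>
    subst ha <;> subst hb <;>
      simp [sgn, show ((1:ZMod 2)+1) = 0 from by decide]

section
variable [Ring A] [Algebra ℂ A]

lemma scomm_mul_right (ε η : ℂ) (x y z : A) :
    scomm (ε * η) x (y * z) = scomm ε x y * z + ε • (y * scomm η x z) := by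
  simp only [scomm, sub_mul, mul_sub, smul_sub, smul_mul_assoc, mul_smul_comm, mul_assoc,
    smul_smul]
  abel

lemma scomm_sum {ι : Type*} (ε : ℂ) (x : A) (s : Finset ι) (f : ι → A) :
    scomm ε x (∑ i ∈ s, f i) = ∑ i ∈ s, scomm ε x (f i) := by
  simp [scomm, Finset.mul_sum, Finset.sum_mul, Finset.smul_sum, Finset.sum_sub_distrib]

lemma scomm_neg (ε : ℂ) (x y : A) : scomm ε x (-y) = - scomm ε x y := by
  simp [scomm]; abel

lemma scomm_delta (ε : ℂ) (x : A) {P : Prop} [Decidable P] (hε : P → ε = 1) :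
    scomm ε x (if P then (1:A) else 0) = 0 := by
  by_cases h : P
  · simp [h, hε h, scomm]
  · simp [h, scomm]
end

variable [Ring A] [Algebra ℂ A] {d : ℕ} {p : ℕ → ZMod 2}

lemma sgn_diag (a b c : ZMod 2) : sgn ((a + b) * (c + c)) = 1 := by
  rw [show c + c = 0 from by rcases zmod2_cases c with h | h <;> simp [h, show ((1:ZMod 2)+1) = 0 from by decide]]
  simp [sgn]

/-- The RTT relation in "(u-v)[...]" coefficient form. -/
lemma star (S : RTT A d p) {i j h k : ℕ} (hi : i < d) (hj : j < d) (hh : h < d) (hk : k < d)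
    (r s : ℕ) :
    scomm (sgn ((p i + p j) * (p h + p k))) (S.t i j (r + 1)) (S.t h k s) -
      scomm (sgn ((p i + p j) * (p h + p k))) (S.t i j r) (S.t h k (s + 1)) =
    sgn (p i * p j + p i * p h + p j * p h) •
      (S.t h j r * S.t i k s - S.t h j s * S.t i k r) := by
  rw [S.rtt i j h k (r+1) s hi hj hh hk, S.rtt i j h k r (s+1) hi hj hh hk, ← smul_sub]
  congr 1
  set f : ℕ → ℕ → A := fun a b => S.t h j a * S.t i k b - S.t h j b * S.t i k a with hf
  have hf0 : ∀ a, f a a = 0 := fun a => sub_self _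
  show (∑ g ∈ Finset.range (min (r+1) s), f g (r + 1 + s - 1 - g)) -
      (∑ g ∈ Finset.range (min r (s+1)), f g (r + (s + 1) - 1 - g)) = f r s
  simp only [show r + 1 + s - 1 = r + s from by omega, show r + (s + 1) - 1 = r + s from by omega]
  rcases lt_trichotomy r s with hrs | hrs | hrs
  · rw [min_eq_left (by omega : r + 1 ≤ s), min_eq_left (by omega : r ≤ s + 1),
      Finset.sum_range_succ, show r + s - r = s from by omega]
    abel
  · subst hrs
    rw [min_eq_right (by omega : r ≤ r + 1), min_eq_left (by omega : r ≤ r + 1), sub_self,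
      hf0 r]
  · rw [min_eq_right (by omega : s ≤ r + 1), min_eq_right (by omega : s + 1 ≤ r),
      Finset.sum_range_succ, show r + s - s = r from by omega]
    have : f s r = - f r s := by simp [hf]
    rw [this]; abel

section
variable (S : RTT A d p) (t' : ℕ → ℕ → ℕ → A)

lemma tprime_zero
    (hinv : ∀ i j r : ℕ, i < d → j < d →
      ∑ g ∈ Finset.range d, ∑ e ∈ Finset.range (r + 1), S.t i g e * t' g j (r - e) =
        if i = j ∧ r = 0 then 1 else 0)
    {i j : ℕ} (hi : i < d) (hj : j < d) :
    t' i j 0 = if i = j then (1:A) else 0 := by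
  have H := hinv i j 0 hi hj
  simpa [S.t_zero, ite_mul, Finset.sum_ite_eq, Finset.mem_range, hi] using H

lemma tprime_rec
    (hinv' : ∀ i j r : ℕ, i < d → j < d →
      ∑ g ∈ Finset.range d, ∑ e ∈ Finset.range (r + 1), t' i g e * S.t g j (r - e) =
        if i = j ∧ r = 0 then 1 else 0)
    {h k : ℕ} (hh : h < d) (hk : k < d) (n : ℕ) :
    t' h k (n + 1) =
      - ∑ g ∈ Finset.range d, ∑ e ∈ Finset.range (n + 1), t' h g e * S.t g k (n + 1 - e) := by
  have H := hinv' h k (n+1) hh hk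
  simp only [Finset.sum_range_succ (n := n+1), Nat.sub_self, S.t_zero, mul_ite, mul_one,
    mul_zero, Nat.succ_ne_zero, and_false, if_false, Finset.sum_add_distrib,
    Finset.sum_ite_eq', Finset.mem_range, hk, if_true] at H
  exact eq_neg_of_add_eq_zero_right H
end


lemma comm_one (S : RTT A d p) {i j h k : ℕ} (hi : i < d) (hj : j < d) (hh : h < d)
    (hk : k < d) (r : ℕ) :
    scomm (sgn ((p i + p j) * (p h + p k))) (S.t i j r) (S.t h k 1) =
      sgn (p i * p j + p i * p h + p j * p h) •
        ((if h = j then S.t i k r else 0) - (if i = k then S.t h j r else 0)) := by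
  have h0 : scomm (sgn ((p i + p j) * (p h + p k))) (S.t i j (r+1)) (S.t h k 0) = 0 := by
    rw [S.t_zero]
    exact scomm_delta _ _ (fun he => by rw [he]; exact sgn_diag _ _ _)
  have hst := star S hi hj hh hk r 0
  rw [h0, zero_sub, neg_eq_iff_eq_neg] at hst
  rw [hst, ← smul_neg, neg_sub]
  congr 1
  simp [S.t_zero, mul_ite, ite_mul]


lemma sgn_split (a b c e f : ZMod 2) :
    sgn ((a + b) * (c + f)) = sgn ((a + b) * (c + e)) * sgn ((a + b) * (e + f)) := by
  rw [← sgn_add]; congr 1; revert a b c e f; decide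

lemma sgn_combine (a b c g : ZMod 2) :
    sgn ((a + b) * (c + g)) * sgn (a * b + a * g + b * g) = sgn (a * b + a * c + b * c) := by
  rw [← sgn_add]; congr 1; revert a b c g; decide


section
variable (S : RTT A d p) (t' : ℕ → ℕ → ℕ → A)

lemma step
    (hinv : ∀ i j r : ℕ, i < d → j < d →
      ∑ g ∈ Finset.range d, ∑ e ∈ Finset.range (r + 1), S.t i g e * t' g j (r - e) =
        if i = j ∧ r = 0 then 1 else 0)
    (hinv' : ∀ i j r : ℕ, i < d → j < d →
      ∑ g ∈ Finset.range d, ∑ e ∈ Finset.range (r + 1), t' i g e * S.t g j (r - e) =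
        if i = j ∧ r = 0 then 1 else 0)
    (n : ℕ)
    (IH : ∀ e ≤ n, ∀ i j h k r : ℕ, i < d → j < d → h < d → k < d →
      scomm (sgn ((p i + p j) * (p h + p k))) (S.t i j (r + 1)) (t' h k e) -
          scomm (sgn ((p i + p j) * (p h + p k))) (S.t i j r) (t' h k (e + 1)) =
        sgn (p i * p j + p i * p h + p j * p h) •
          ((if h = j then ∑ g ∈ Finset.range d, S.t i g r * t' g k e else 0) -
           (if i = k then ∑ g ∈ Finset.range d, t' h g e * S.t g j r else 0)))
    (i j h k r : ℕ) (hi : i < d) (hj : j < d) (hh : h < d) (hk : k < d) :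
    scomm (sgn ((p i + p j) * (p h + p k))) (S.t i j (r + 1)) (t' h k (n + 1)) -
        scomm (sgn ((p i + p j) * (p h + p k))) (S.t i j r) (t' h k (n + 1 + 1)) =
      sgn (p i * p j + p i * p h + p j * p h) •
        ((if h = j then ∑ g ∈ Finset.range d, S.t i g r * t' g k (n + 1) else 0) -
         (if i = k then ∑ g ∈ Finset.range d, t' h g (n + 1) * S.t g j r else 0)) := by
  rw [tprime_rec S t' hinv' hh hk n, tprime_rec S t' hinv' hh hk (n + 1)]
  simp only [scomm_neg, scomm_sum, sub_neg_eq_add]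
  rw [neg_add_eq_sub, ← Finset.sum_sub_distrib]
  have key_g : ∀ g ∈ Finset.range d,
      (∑ e ∈ Finset.range (n + 1 + 1),
          scomm (sgn ((p i + p j) * (p h + p k))) (S.t i j r)
            (t' h g e * S.t g k (n + 1 + 1 - e))) -
        ∑ e ∈ Finset.range (n + 1),
          scomm (sgn ((p i + p j) * (p h + p k))) (S.t i j (r + 1))
            (t' h g e * S.t g k (n + 1 - e)) =
      sgn (p i * p j + p i * p h + p j * p h) •
        ((∑ e ∈ Finset.range (n + 1),
            (-(((if h = j then ∑ a ∈ Finset.range d, S.t i a r * t' a g e else 0) -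
                (if i = g then ∑ a ∈ Finset.range d, t' h a e * S.t a j r else 0)) *
                  S.t g k (n + 1 - e)) -
             t' h g e * (S.t g j r * S.t i k (n + 1 - e) -
                S.t g j (n + 1 - e) * S.t i k r))) +
          t' h g (n + 1) * ((if g = j then S.t i k r else 0) -
            (if i = k then S.t g j r else 0))) := by
    intro g hg
    have hgd := Finset.mem_range.mp hg
    have hsc : ∀ x y z : A,
        scomm (sgn ((p i + p j) * (p h + p k))) x (y * z) =
          scomm (sgn ((p i + p j) * (p h + p g))) x y * z +
            sgn ((p i + p j) * (p h + p g)) •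
              (y * scomm (sgn ((p i + p j) * (p g + p k))) x z) := fun x y z => by
      rw [sgn_split (p i) (p j) (p h) (p g) (p k), scomm_mul_right]
    have hsig : sgn ((p i + p j) * (p h + p g)) * sgn (p i * p j + p i * p g + p j * p g) =
        sgn (p i * p j + p i * p h + p j * p h) := sgn_combine _ _ _ _
    have hP0 : scomm (sgn ((p i + p j) * (p h + p g))) (S.t i j r) (t' h g 0) = 0 := by
      rw [tprime_zero S t' hinv hh hgd]
      exact scomm_delta _ _ (fun he => by rw [he]; exact sgn_diag _ _ _)
    simp only [hsc, Finset.sum_add_distrib]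
    have h2a : (∑ e ∈ Finset.range (n + 1 + 1),
        scomm (sgn ((p i + p j) * (p h + p g))) (S.t i j r) (t' h g e) *
          S.t g k (n + 1 + 1 - e)) =
        ∑ e ∈ Finset.range (n + 1),
          scomm (sgn ((p i + p j) * (p h + p g))) (S.t i j r) (t' h g (e + 1)) *
            S.t g k (n + 1 - e) := by
      rw [Finset.sum_range_succ'
        (fun e => scomm (sgn ((p i + p j) * (p h + p g))) (S.t i j r) (t' h g e) *
          S.t g k (n + 1 + 1 - e)) (n + 1)]
      rw [hP0, zero_mul, add_zero]
      exact Finset.sum_congr rfl fun e _ => by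
        rw [show n + 1 + 1 - (e + 1) = n + 1 - e from by omega]
    have h2b : (∑ e ∈ Finset.range (n + 1 + 1),
        sgn ((p i + p j) * (p h + p g)) •
          (t' h g e * scomm (sgn ((p i + p j) * (p g + p k))) (S.t i j r)
            (S.t g k (n + 1 + 1 - e)))) =
        (∑ e ∈ Finset.range (n + 1),
          sgn ((p i + p j) * (p h + p g)) •
            (t' h g e * scomm (sgn ((p i + p j) * (p g + p k))) (S.t i j r)
              (S.t g k (n + 1 + 1 - e)))) +
          sgn ((p i + p j) * (p h + p g)) •
            (t' h g (n + 1) * scomm (sgn ((p i + p j) * (p g + p k))) (S.t i j r)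
              (S.t g k 1)) := by
      rw [Finset.sum_range_succ, show n + 1 + 1 - (n + 1) = 1 from by omega]
    rw [h2a, h2b]
    have hA : (∑ e ∈ Finset.range (n + 1),
        scomm (sgn ((p i + p j) * (p h + p g))) (S.t i j r) (t' h g (e + 1)) *
          S.t g k (n + 1 - e)) -
        (∑ e ∈ Finset.range (n + 1),
          scomm (sgn ((p i + p j) * (p h + p g))) (S.t i j (r + 1)) (t' h g e) *
            S.t g k (n + 1 - e)) =
        - ∑ e ∈ Finset.range (n + 1),
            sgn (p i * p j + p i * p h + p j * p h) •
              (((if h = j then ∑ a ∈ Finset.range d, S.t i a r * t' a g e else 0) -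
                (if i = g then ∑ a ∈ Finset.range d, t' h a e * S.t a j r else 0)) *
                S.t g k (n + 1 - e)) := by
      rw [← Finset.sum_sub_distrib, ← Finset.sum_neg_distrib]
      refine Finset.sum_congr rfl fun e he => ?_
      have hih := IH e (Nat.lt_succ_iff.mp (Finset.mem_range.mp he)) i j h g r hi hj hh hgd
      rw [← sub_mul, show
        scomm (sgn ((p i + p j) * (p h + p g))) (S.t i j r) (t' h g (e + 1)) -
          scomm (sgn ((p i + p j) * (p h + p g))) (S.t i j (r + 1)) (t' h g e) =
        -(scomm (sgn ((p i + p j) * (p h + p g))) (S.t i j (r + 1)) (t' h g e) -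
          scomm (sgn ((p i + p j) * (p h + p g))) (S.t i j r) (t' h g (e + 1)))
          from (neg_sub _ _).symm, hih, neg_mul, smul_mul_assoc]
    have hB : (∑ e ∈ Finset.range (n + 1),
        sgn ((p i + p j) * (p h + p g)) •
          (t' h g e * scomm (sgn ((p i + p j) * (p g + p k))) (S.t i j r)
            (S.t g k (n + 1 + 1 - e)))) -
        (∑ e ∈ Finset.range (n + 1),
          sgn ((p i + p j) * (p h + p g)) •
            (t' h g e * scomm (sgn ((p i + p j) * (p g + p k))) (S.t i j (r + 1))
              (S.t g k (n + 1 - e)))) =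
        - ∑ e ∈ Finset.range (n + 1),
            sgn (p i * p j + p i * p h + p j * p h) •
              (t' h g e * (S.t g j r * S.t i k (n + 1 - e) -
                S.t g j (n + 1 - e) * S.t i k r)) := by
      rw [← Finset.sum_sub_distrib, ← Finset.sum_neg_distrib]
      refine Finset.sum_congr rfl fun e he => ?_
      have he' : e < n + 1 := Finset.mem_range.mp he
      have hst := star S hi hj hgd hk r (n + 1 - e)
      rw [show n + 1 - e + 1 = n + 1 + 1 - e from by omega] at hst
      rw [← smul_sub, ← mul_sub, show
        scomm (sgn ((p i + p j) * (p g + p k))) (S.t i j r) (S.t g k (n + 1 + 1 - e)) -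
          scomm (sgn ((p i + p j) * (p g + p k))) (S.t i j (r + 1)) (S.t g k (n + 1 - e)) =
        -(scomm (sgn ((p i + p j) * (p g + p k))) (S.t i j (r + 1)) (S.t g k (n + 1 - e)) -
          scomm (sgn ((p i + p j) * (p g + p k))) (S.t i j r) (S.t g k (n + 1 + 1 - e)))
          from (neg_sub _ _).symm, hst, mul_neg, mul_smul_comm, smul_neg, smul_smul, hsig]
    have hC : sgn ((p i + p j) * (p h + p g)) •
        (t' h g (n + 1) * scomm (sgn ((p i + p j) * (p g + p k))) (S.t i j r)
          (S.t g k 1)) =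
        sgn (p i * p j + p i * p h + p j * p h) •
          (t' h g (n + 1) * ((if g = j then S.t i k r else 0) -
            (if i = k then S.t g j r else 0))) := by
      rw [comm_one S hi hj hgd hk r, mul_smul_comm, smul_smul, hsig]
    have hA' : (∑ e ∈ Finset.range (n + 1),
        scomm (sgn ((p i + p j) * (p h + p g))) (S.t i j r) (t' h g (e + 1)) *
          S.t g k (n + 1 - e)) =
        (- ∑ e ∈ Finset.range (n + 1),
            sgn (p i * p j + p i * p h + p j * p h) •
              (((if h = j then ∑ a ∈ Finset.range d, S.t i a r * t' a g e else 0) -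
                (if i = g then ∑ a ∈ Finset.range d, t' h a e * S.t a j r else 0)) *
                S.t g k (n + 1 - e))) +
        ∑ e ∈ Finset.range (n + 1),
          scomm (sgn ((p i + p j) * (p h + p g))) (S.t i j (r + 1)) (t' h g e) *
            S.t g k (n + 1 - e) := by
      rw [← hA]; abel
    have hB' : (∑ e ∈ Finset.range (n + 1),
        sgn ((p i + p j) * (p h + p g)) •
          (t' h g e * scomm (sgn ((p i + p j) * (p g + p k))) (S.t i j r)
            (S.t g k (n + 1 + 1 - e)))) =
        (- ∑ e ∈ Finset.range (n + 1),
            sgn (p i * p j + p i * p h + p j * p h) •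
              (t' h g e * (S.t g j r * S.t i k (n + 1 - e) -
                S.t g j (n + 1 - e) * S.t i k r))) +
        ∑ e ∈ Finset.range (n + 1),
          sgn ((p i + p j) * (p h + p g)) •
            (t' h g e * scomm (sgn ((p i + p j) * (p g + p k))) (S.t i j (r + 1))
              (S.t g k (n + 1 - e))) := by
      rw [← hB]; abel
    rw [hA', hB', hC]
    simp only [smul_add, smul_sub, smul_neg, Finset.smul_sum, Finset.sum_sub_distrib,
      Finset.sum_add_distrib, Finset.sum_neg_distrib]
    abel
  rw [Finset.sum_congr rfl key_g, ← Finset.smul_sum]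
  congr 1
  have h1 : (∑ g ∈ Finset.range d, ∑ e ∈ Finset.range (n + 1),
      (if h = j then ∑ a ∈ Finset.range d, S.t i a r * t' a g e else 0) *
        S.t g k (n + 1 - e)) =
      -(if h = j then ∑ g ∈ Finset.range d, S.t i g r * t' g k (n + 1) else 0) := by
    by_cases hhj : h = j
    · simp only [if_pos hhj]
      calc ∑ g ∈ Finset.range d, ∑ e ∈ Finset.range (n + 1),
            (∑ a ∈ Finset.range d, S.t i a r * t' a g e) * S.t g k (n + 1 - e)
          = ∑ a ∈ Finset.range d, S.t i a r *
              ∑ g ∈ Finset.range d, ∑ e ∈ Finset.range (n + 1),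
                t' a g e * S.t g k (n + 1 - e) := by
            simp only [Finset.sum_mul, mul_assoc, Finset.mul_sum]
            rw [Finset.sum_congr rfl fun g _ => Finset.sum_comm, Finset.sum_comm]
        _ = ∑ a ∈ Finset.range d, S.t i a r * (- t' a k (n + 1)) :=
            Finset.sum_congr rfl fun a ha => by
              rw [tprime_rec S t' hinv' (Finset.mem_range.mp ha) hk n, neg_neg]
        _ = -(∑ g ∈ Finset.range d, S.t i g r * t' g k (n + 1)) := by
            simp only [mul_neg, Finset.sum_neg_distrib]
    · simp only [if_neg hhj, zero_mul, Finset.sum_const_zero, neg_zero]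
  have h2 : (∑ g ∈ Finset.range d, ∑ e ∈ Finset.range (n + 1),
      (if i = g then ∑ a ∈ Finset.range d, t' h a e * S.t a j r else 0) *
        S.t g k (n + 1 - e)) =
      ∑ e ∈ Finset.range (n + 1), ∑ a ∈ Finset.range d,
        t' h a e * (S.t a j r * S.t i k (n + 1 - e)) := by
    rw [Finset.sum_comm]
    refine Finset.sum_congr rfl fun e _ => ?_
    simp only [ite_mul, zero_mul]
    rw [Finset.sum_ite_eq, if_pos (Finset.mem_range.mpr hi), Finset.sum_mul]
    exact Finset.sum_congr rfl fun a _ => mul_assoc _ _ _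
  have h3 : (∑ g ∈ Finset.range d, ∑ e ∈ Finset.range (n + 1),
      t' h g e * (S.t g j r * S.t i k (n + 1 - e))) =
      ∑ e ∈ Finset.range (n + 1), ∑ a ∈ Finset.range d,
        t' h a e * (S.t a j r * S.t i k (n + 1 - e)) := Finset.sum_comm
  have h4 : (∑ g ∈ Finset.range d, ∑ e ∈ Finset.range (n + 1),
      t' h g e * (S.t g j (n + 1 - e) * S.t i k r)) =
      -(t' h j (n + 1) * S.t i k r) := by
    simp only [← mul_assoc, ← Finset.sum_mul]
    rw [show (∑ g ∈ Finset.range d, ∑ e ∈ Finset.range (n + 1),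
        t' h g e * S.t g j (n + 1 - e)) = - t' h j (n + 1) from by
      rw [tprime_rec S t' hinv' hh hj n, neg_neg], neg_mul]
  have h5 : (∑ g ∈ Finset.range d,
      t' h g (n + 1) * (if g = j then S.t i k r else 0)) =
      t' h j (n + 1) * S.t i k r := by
    simp only [mul_ite, mul_zero]
    rw [Finset.sum_ite_eq', if_pos (Finset.mem_range.mpr hj)]
  have h6 : (∑ g ∈ Finset.range d,
      t' h g (n + 1) * (if i = k then S.t g j r else 0)) =
      if i = k then ∑ g ∈ Finset.range d, t' h g (n + 1) * S.t g j r else 0 := by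
    split <;> simp
  simp only [sub_mul, mul_sub, neg_sub, Finset.sum_add_distrib, Finset.sum_sub_distrib]
  rw [h1, h2, h3, h4, h5, h6]
  abel

lemma key
    (hinv : ∀ i j r : ℕ, i < d → j < d →
      ∑ g ∈ Finset.range d, ∑ e ∈ Finset.range (r + 1), S.t i g e * t' g j (r - e) =
        if i = j ∧ r = 0 then 1 else 0)
    (hinv' : ∀ i j r : ℕ, i < d → j < d →
      ∑ g ∈ Finset.range d, ∑ e ∈ Finset.range (r + 1), t' i g e * S.t g j (r - e) =
        if i = j ∧ r = 0 then 1 else 0) :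
    ∀ s i j h k r : ℕ, i < d → j < d → h < d → k < d →
      scomm (sgn ((p i + p j) * (p h + p k))) (S.t i j (r + 1)) (t' h k s) -
          scomm (sgn ((p i + p j) * (p h + p k))) (S.t i j r) (t' h k (s + 1)) =
        sgn (p i * p j + p i * p h + p j * p h) •
          ((if h = j then ∑ g ∈ Finset.range d, S.t i g r * t' g k s else 0) -
           (if i = k then ∑ g ∈ Finset.range d, t' h g s * S.t g j r else 0)) := by
  intro s
  induction s using Nat.strong_induction_on with
  | _ s IH =>
    obtain _ | n := s
    · intro i j h k r hi hj hh hk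
      have hb0 : scomm (sgn ((p i + p j) * (p h + p k))) (S.t i j (r + 1)) (t' h k 0) = 0 := by
        rw [tprime_zero S t' hinv hh hk]
        exact scomm_delta _ _ (fun he => by rw [he]; exact sgn_diag _ _ _)
      have hb1 : t' h k (0 + 1) = - S.t h k 1 := by
        rw [tprime_rec S t' hinv' hh hk 0]
        have hc : ∀ g ∈ Finset.range d,
            (∑ e ∈ Finset.range (0 + 1), t' h g e * S.t g k (0 + 1 - e)) =
              if h = g then S.t g k 1 else 0 := by
          intro g hg
          simp [tprime_zero S t' hinv hh (Finset.mem_range.mp hg), ite_mul]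
        rw [Finset.sum_congr rfl hc, Finset.sum_ite_eq, if_pos (Finset.mem_range.mpr hh)]
      rw [hb0, hb1, scomm_neg, zero_sub, neg_neg, comm_one S hi hj hh hk r]
      have hs1 : (∑ g ∈ Finset.range d, S.t i g r * t' g k 0) = S.t i k r := by
        rw [Finset.sum_congr rfl
          (fun g hg => by rw [tprime_zero S t' hinv (Finset.mem_range.mp hg) hk])]
        simp [mul_ite, Finset.sum_ite_eq', Finset.mem_range.mpr hk]
      have hs2 : (∑ g ∈ Finset.range d, t' h g 0 * S.t g j r) = S.t h j r := by
        rw [Finset.sum_congr rfl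
          (fun g hg => by rw [tprime_zero S t' hinv hh (Finset.mem_range.mp hg)])]
        simp [ite_mul, Finset.sum_ite_eq, Finset.mem_range.mpr hh]
      rw [hs1, hs2]
    · exact fun i j h k r hi hj hh hk =>
        step S t' hinv hinv' n (fun e he => IH e (by omega)) i j h k r hi hj hh hk

end
end Helpers

/-- Let `t' i j r` be the coefficients of the entries of the inverse
matrix `T(u)^{-1}` (hypotheses `hinv`, `hinv'`).  Then
`(u-v)[t_{ij}(u), t'_{hk}(v)] = (-1)^{|i||j|+|i||h|+|j||h|} (δ_{hj} Σ_g t_{ig}(u) t'_{gk}(v)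
- δ_{ik} Σ_g t'_{hg}(v) t_{gj}(u))`, stated as equality of coefficients of `u^{-r} v^{-s}`. -/
theorem statement1 [Ring A] [Algebra ℂ A] {d : ℕ} {p : ℕ → ZMod 2} (S : RTT A d p)
    (t' : ℕ → ℕ → ℕ → A)
    (hinv : ∀ i j r : ℕ, i < d → j < d →
      ∑ g ∈ Finset.range d, ∑ e ∈ Finset.range (r + 1), S.t i g e * t' g j (r - e) =
        if i = j ∧ r = 0 then 1 else 0)
    (hinv' : ∀ i j r : ℕ, i < d → j < d →
      ∑ g ∈ Finset.range d, ∑ e ∈ Finset.range (r + 1), t' i g e * S.t g j (r - e) =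
        if i = j ∧ r = 0 then 1 else 0) :
    ∀ i j h k r s : ℕ, i < d → j < d → h < d → k < d →
      scomm (sgn ((p i + p j) * (p h + p k))) (S.t i j (r + 1)) (t' h k s) -
          scomm (sgn ((p i + p j) * (p h + p k))) (S.t i j r) (t' h k (s + 1)) =
        sgn (p i * p j + p i * p h + p j * p h) •
          ((if h = j then ∑ g ∈ Finset.range d, S.t i g r * t' g k s else 0) -
           (if i = k then ∑ g ∈ Finset.range d, t' h g s * S.t g j r else 0)) := by
  intro i j h k r s hi hj hh hk
  exact key S t' hinv hinv' s i j h k r hi hj hh hk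

end SuperYangian
end
end

section
/- The map ρ_{M|N} : Y_{M|N}(s) → Y_{N|M}(s†) sending t_{ij}(u) to t_{M+N+1-i, M+N+1-j}(-u) is an isomorphism of superalgebras, where s† is obtained from s by interchanging 0's and 1's and then reversing. -/
noncomputable section

namespace SuperYangian

/-- The element of the free algebra representing `t_{ij}^{(r)}`; the free generator
`(i, j, r)` stands for `t_{ij}^{(r+1)}`, and `t_{ij}^{(0)} = δ_{ij}`. -/
def tF (d : ℕ) (i j : Fin d) : ℕ → FreeAlgebra ℂ (Fin d × Fin d × ℕ)
  | 0 => if i = j then 1 else 0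
  | r + 1 => FreeAlgebra.ι ℂ (i, j, r)

/-- The RTT relations of the super Yangian `Y(gl_{M|N})` with parity sequence `p`. -/
inductive YRel (d : ℕ) (p : Fin d → ZMod 2) :
    FreeAlgebra ℂ (Fin d × Fin d × ℕ) → FreeAlgebra ℂ (Fin d × Fin d × ℕ) → Prop
  | rtt (i j h k : Fin d) (r s : ℕ) :
      YRel d p
        (tF d i j r * tF d h k s -
          sgn ((p i + p j) * (p h + p k)) • (tF d h k s * tF d i j r))
        (sgn (p i * p j + p i * p h + p j * p h) •
          ∑ g ∈ Finset.range (min r s),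
            (tF d h j g * tF d i k (r + s - 1 - g) -
             tF d h j (r + s - 1 - g) * tF d i k g))

/-- The super Yangian `Y(gl_{M|N})`, where `d = M + N` and `p` is the (arbitrary)
`0^M1^N`-sequence giving the parities of the indices. -/
abbrev Y (d : ℕ) (p : Fin d → ZMod 2) := RingQuot (YRel d p)

/-- The RTT generator `t_{ij}^{(r)}` of the super Yangian. -/
def tY (d : ℕ) (p : Fin d → ZMod 2) (i j : Fin d) (r : ℕ) : Y d p :=
  RingQuot.mkAlgHom ℂ (YRel d p) (tF d i j r)

/-! The relation `YRel` is homogeneous: each side scales by `(-1)^(r+s)` under `t^{(r)} ↦ (-1)^r t^{(r)}`,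
because the right-hand side has total degree `r + s - 1`, but its sign `sgn (p i p j + p i p h + p j p h)`
flips when all parities are flipped. Swapping the parities also leaves the sign on the left-hand side
unchanged, and reversing the indices keeps the shape of the relation, so `ρ` respects `YRel`. Applying
the same construction to `s†` gives the inverse, since `(s†)† = s`. -/

lemma sgn_one_add (x : ZMod 2) : sgn (1 + x) = -sgn x := by
  obtain rfl | rfl : x = 0 ∨ x = 1 := by revert x; decide
  · simp [sgn]
  · simp [sgn, show (1 + 1 : ZMod 2) = 0 from rfl]

lemma one_add_add_one_add (a b : ZMod 2) : (1 + a) + (1 + b) = a + b := by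
  revert a b; decide

lemma one_add_one_add (a : ZMod 2) : 1 + (1 + a) = a := by
  revert a; decide

lemma one_add_mul_one_add_sym (a b c : ZMod 2) :
    (1 + a) * (1 + b) + (1 + a) * (1 + c) + (1 + b) * (1 + c) = 1 + (a * b + a * c + b * c) := by
  revert a b c; decide

lemma neg_one_pow_mul_neg_one_pow_sub {R : Type*} [Ring R] {r s x : ℕ} (hx : x < min r s) :
    (-1 : R) ^ x * (-1) ^ (r + s - 1 - x) = -((-1) ^ r * (-1) ^ s) := by
  obtain ⟨n, hn⟩ : ∃ n, r + s = n + 1 := ⟨r + s - 1, by omega⟩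
  rw [← pow_add, ← pow_add, hn, pow_succ, show x + (n + 1 - 1 - x) = n by omega, mul_neg_one, neg_neg]

variable {d : ℕ}

lemma Y.algHom_ext {p : Fin d → ZMod 2} {B : Type*} [Semiring B] [Algebra ℂ B]
    {f g : Y d p →ₐ[ℂ] B}
    (h : ∀ (i j : Fin d) (r : ℕ), f (tY d p i j (r + 1)) = g (tY d p i j (r + 1))) :
    f = g :=
  RingQuot.ringQuot_ext' ℂ _ _ (FreeAlgebra.hom_ext (funext fun ⟨i, j, r⟩ => h i j r))

def rhoFree (q : Fin d → ZMod 2) : FreeAlgebra ℂ (Fin d × Fin d × ℕ) →ₐ[ℂ] Y d q :=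
  FreeAlgebra.lift ℂ fun x => (-1 : ℂ) ^ (x.2.2 + 1) • tY d q x.1.rev x.2.1.rev (x.2.2 + 1)

lemma rhoFree_tF (q : Fin d → ZMod 2) (i j : Fin d) (r : ℕ) :
    rhoFree q (tF d i j r) = (-1 : ℂ) ^ r • tY d q i.rev j.rev r := by
  cases r with
  | zero => by_cases h : i = j <;> simp [tF, tY, h]
  | succ r => simp [tF, tY, rhoFree]

variable {p q : Fin d → ZMod 2}

lemma tY_rtt (i j h k : Fin d) (r s : ℕ) :
    tY d p i j r * tY d p h k s - sgn ((p i + p j) * (p h + p k)) • (tY d p h k s * tY d p i j r) =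
      sgn (p i * p j + p i * p h + p j * p h) • ∑ g ∈ Finset.range (min r s),
        (tY d p h j g * tY d p i k (r + s - 1 - g) - tY d p h j (r + s - 1 - g) * tY d p i k g) := by
  have hrel := RingQuot.mkAlgHom_rel ℂ (YRel.rtt (p := p) i j h k r s)
  simp only [map_sub, map_mul, map_smul, map_sum] at hrel
  exact hrel

lemma rhoFree_rtt_rhs (i j h k : Fin d) (r s : ℕ) :
    rhoFree q (∑ g ∈ Finset.range (min r s),
        (tF d h j g * tF d i k (r + s - 1 - g) - tF d h j (r + s - 1 - g) * tF d i k g)) =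
      -((-1 : ℂ) ^ r * (-1) ^ s) • ∑ g ∈ Finset.range (min r s),
        (tY d q h.rev j.rev g * tY d q i.rev k.rev (r + s - 1 - g) -
          tY d q h.rev j.rev (r + s - 1 - g) * tY d q i.rev k.rev g) := by
  simp only [map_sum, map_sub, map_mul, rhoFree_tF, smul_mul_smul_comm, Finset.smul_sum, smul_sub]
  refine Finset.sum_congr rfl fun g hg => ?_
  have hsign := neg_one_pow_mul_neg_one_pow_sub (R := ℂ) (Finset.mem_range.mp hg)
  rw [hsign, mul_comm ((-1 : ℂ) ^ (r + s - 1 - g)), hsign]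

lemma rhoFree_rel (hq : ∀ x : Fin d, q x.rev = 1 + p x)
    {a b : FreeAlgebra ℂ (Fin d × Fin d × ℕ)} (hab : YRel d p a b) :
    rhoFree q a = rhoFree q b := by
  induction hab with
  | rtt i j h k r s =>
    have hrtt := tY_rtt (p := q) i.rev j.rev h.rev k.rev r s
    rw [hq, hq, hq, hq, one_add_add_one_add, one_add_add_one_add, one_add_mul_one_add_sym,
      sgn_one_add, sub_eq_iff_eq_add] at hrtt
    simp only [map_sub, map_mul, map_smul, rhoFree_tF, smul_mul_smul_comm, rhoFree_rtt_rhs, hrtt]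
    match_scalars <;> ring

def rho (hq : ∀ x : Fin d, q x.rev = 1 + p x) : Y d p →ₐ[ℂ] Y d q :=
  RingQuot.liftAlgHom ℂ ⟨rhoFree q, fun _ _ => rhoFree_rel hq⟩

lemma rho_tY (hq : ∀ x : Fin d, q x.rev = 1 + p x) (i j : Fin d) (r : ℕ) :
    rho hq (tY d p i j r) = (-1 : ℂ) ^ r • tY d q i.rev j.rev r := by
  rw [tY, rho, RingQuot.liftAlgHom_mkAlgHom_apply, rhoFree_tF]

lemma rho_comp_rho (hq : ∀ x : Fin d, q x.rev = 1 + p x) (hp : ∀ x : Fin d, p x.rev = 1 + q x) :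
    (rho hp).comp (rho hq) = AlgHom.id ℂ (Y d p) :=
  Y.algHom_ext fun i j r => by
    simp [rho_tY, smul_smul, ← mul_pow]

/-- The map `ρ_{M|N} : Y_{M|N}(s) → Y_{N|M}(s†)`,
`t_{ij}(u) ↦ t_{M+N+1-i, M+N+1-j}(-u)` (i.e. `t_{ij}^{(r)} ↦ (-1)^r t_{rev i, rev j}^{(r)}`),
is an isomorphism of superalgebras; here `s†` is obtained from `s` by interchanging
`0`'s and `1`'s and reversing, so the parity function of `s†` is `i ↦ 1 + p (rev i)`. -/
theorem statement2 (d : ℕ) (p : Fin d → ZMod 2) :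
    ∃ ρ : Y d p ≃ₐ[ℂ] Y d (fun i => 1 + p i.rev),
      ∀ (i j : Fin d) (r : ℕ),
        ρ (tY d p i j r) =
          ((-1 : ℂ)) ^ r • tY d (fun i => 1 + p i.rev) i.rev j.rev r := by
  have hq : ∀ x : Fin d, 1 + p x.rev.rev = 1 + p x := fun x => by rw [Fin.rev_rev]
  have hp : ∀ x : Fin d, p x.rev = 1 + (1 + p x.rev) := fun x => (one_add_one_add _).symm
  exact ⟨AlgEquiv.ofAlgHom (rho hq) (rho hp) (rho_comp_rho hp hq) (rho_comp_rho hq hp), rho_tY hq⟩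

end SuperYangian
end
end
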